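/- arXiv:1006.2574 — 2 statements merged into one kernel-verified Lean document; each statement's English description precedes it below -/
import Mathlib

section
/- Let μ, ν > 0 and 0 < δ < μ²/(4ν), and let u : ℝ≥0 → ℝ be a differentiable function with u(0) = μ/ν satisfying u'(t) = u(t)(μ − ν u(t)) − δ for all t ≥ 0. Then u(t) ∈ [p²_δ, μ/ν] for all t ≥ 0 and u(t) → p²_δ as t → ∞, where p²_δ = (μ + √(μ² − 4νδ))/(2ν). -/
open Filter Topology

/-- Auxiliary: lower bound via Grönwall (no crossing below the equilibrium `p`). -/
theorem stmt_5_aux_lb (μ ν δ p q : ℝ) (hν : 0 < ν) (hpq : q < p)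
    (u : ℝ → ℝ)
    (hu : ∀ t : ℝ, 0 ≤ t → HasDerivAt u (u t * (μ - ν * u t) - δ) t)
    (hfact : ∀ x : ℝ, x * (μ - ν * x) - δ = -(ν * (x - p) * (x - q)))
    (h0 : p ≤ u 0) : ∀ t : ℝ, 0 ≤ t → p ≤ u t := by
  by_contra hcon
  push_neg at hcon
  obtain ⟨t₁, ht₁0, ht₁⟩ := hcon
  have hcont : ContinuousOn u (Set.Icc 0 t₁) := fun t ht =>
    ((hu t ht.1).continuousAt).continuousWithinAt
  set S : Set ℝ := Set.Icc 0 t₁ ∩ u ⁻¹' Set.Ici p with hSdef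
  have hS0 : (0 : ℝ) ∈ S := ⟨⟨le_refl 0, ht₁0⟩, h0⟩
  have hSbdd : BddAbove S := ⟨t₁, fun t ht => ht.1.2⟩
  have hSclosed : IsClosed S :=
    hcont.preimage_isClosed_of_isClosed isClosed_Icc isClosed_Ici
  set t₀ : ℝ := sSup S with ht₀def
  have ht₀S : t₀ ∈ S := hSclosed.csSup_mem ⟨0, hS0⟩ hSbdd
  have ht₀0 : 0 ≤ t₀ := ht₀S.1.1
  have ht₀le : t₀ ≤ t₁ := ht₀S.1.2
  have ht₁S : t₁ ∉ S := fun h => absurd h.2 (not_le.2 ht₁)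
  have ht₀lt : t₀ < t₁ := lt_of_le_of_ne ht₀le (fun h => ht₁S (h ▸ ht₀S))
  -- on (t₀, t₁], u < p
  have hlt : ∀ t ∈ Set.Ioc t₀ t₁, u t < p := by
    intro t ht
    by_contra h
    push_neg at h
    have : t ∈ S := ⟨⟨le_trans ht₀0 ht.1.le, ht.2⟩, h⟩
    exact absurd (le_csSup hSbdd this) (not_le.2 ht.1)
  -- Grönwall on [t₀, t₁]
  have hccompact : IsCompact (Set.Icc t₀ t₁) := isCompact_Icc
  have hcont' : ContinuousOn u (Set.Icc t₀ t₁) :=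
    hcont.mono (Set.Icc_subset_Icc ht₀0 le_rfl)
  obtain ⟨C, hC⟩ := hccompact.exists_bound_of_continuousOn
    ((hcont'.sub continuousOn_const (g := fun _ => q)))
  have key : ∀ x ∈ Set.Icc t₀ t₁, ‖u x - p‖ ≤ gronwallBound 0 (ν * C) 0 (x - t₀) := by
    apply norm_le_gronwallBound_of_norm_deriv_right_le
      (f' := fun t => u t * (μ - ν * u t) - δ)
    · exact hcont'.sub continuousOn_const
    · intro x hx
      exact (((hu x (le_trans ht₀0 hx.1)).sub_const p)).hasDerivWithinAt
    · have htends : Filter.Tendsto u (𝓝[>] t₀) (𝓝 (u t₀)) :=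
        ((hu t₀ ht₀0).continuousAt).tendsto.mono_left nhdsWithin_le_nhds
      have hev : ∀ᶠ t in 𝓝[>] t₀, u t ≤ p := by
        filter_upwards [Ioc_mem_nhdsGT ht₀lt] with t ht using (hlt t ht).le
      have hle : u t₀ ≤ p := le_of_tendsto htends hev
      have : u t₀ = p := le_antisymm hle ht₀S.2
      rw [show u t₀ - p = 0 by rw [this]; ring]
      simp
    · intro x hx
      have hC' := hC x ⟨hx.1, hx.2.le⟩
      rw [hfact (u x)]
      have h1 : ‖u x - q‖ ≤ C := hC'
      rw [Real.norm_eq_abs, Real.norm_eq_abs] at *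
      rw [abs_neg, abs_mul, abs_mul, abs_of_pos hν, add_zero]
      nlinarith [abs_nonneg (u x - p), abs_nonneg (u x - q),
        mul_nonneg (mul_nonneg hν.le (abs_nonneg (u x - p))) (sub_nonneg.2 h1)]
  have := key t₁ ⟨ht₀le, le_rfl⟩
  rw [gronwallBound_ε0_δ0, Real.norm_eq_abs] at this
  have h2 : u t₁ - p = 0 := by
    have := abs_nonpos_iff.1 (le_of_eq (le_antisymm this (abs_nonneg _)))
    exact this
  linarith

/-- For subcritical harvesting, the solution starting at `μ/ν` stays in
`[p²_δ, μ/ν]` and converges to `p²_δ = (μ + √(μ² − 4νδ))/(2ν)`. -/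
theorem stmt_5 (μ ν δ : ℝ) (hν : 0 < ν) (hμ : 0 < μ) (hδ0 : 0 < δ)
    (hδ : δ < μ ^ 2 / (4 * ν)) (u : ℝ → ℝ)
    (hu : ∀ t : ℝ, 0 ≤ t → HasDerivAt u (u t * (μ - ν * u t) - δ) t)
    (h0 : u 0 = μ / ν) :
    (∀ t : ℝ, 0 ≤ t →
      u t ∈ Set.Icc ((μ + Real.sqrt (μ ^ 2 - 4 * ν * δ)) / (2 * ν)) (μ / ν)) ∧
    Tendsto u atTop (nhds ((μ + Real.sqrt (μ ^ 2 - 4 * ν * δ)) / (2 * ν))) := by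
  set s : ℝ := Real.sqrt (μ ^ 2 - 4 * ν * δ) with hsdef
  have hd_pos : 0 < μ ^ 2 - 4 * ν * δ := by
    rw [lt_div_iff₀ (by positivity)] at hδ
    nlinarith
  have hs_pos : 0 < s := Real.sqrt_pos.2 hd_pos
  have hs2 : s ^ 2 = μ ^ 2 - 4 * ν * δ := Real.sq_sqrt hd_pos.le
  have hs_lt : s < μ := by nlinarith
  set p : ℝ := (μ + s) / (2 * ν) with hpdef
  set q : ℝ := (μ - s) / (2 * ν) with hqdef
  have h2ν : (0:ℝ) < 2 * ν := by positivity
  have hpq : q < p := by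
    rw [hqdef, hpdef, div_lt_div_iff₀ h2ν h2ν]; nlinarith
  have hq_pos : 0 < q := by
    rw [hqdef]; exact div_pos (by linarith) h2ν
  have hp_lt : p < μ / ν := by
    rw [hpdef, div_lt_div_iff₀ h2ν hν]; nlinarith
  -- factorization of the vector field
  have hA : ν * (p + q) = μ := by rw [hpdef, hqdef]; field_simp; ring
  have hB : ν * (p * q) = δ := by
    rw [hpdef, hqdef]; field_simp; nlinarith
  have hfact : ∀ x : ℝ, x * (μ - ν * x) - δ = -(ν * (x - p) * (x - q)) := by
    intro x
    have hν' : ν ≠ 0 := ne_of_gt hν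
    rw [hpdef, hqdef]
    field_simp
    ring_nf
    linear_combination (-1) * hs2
  -- bounds
  have hp0 : p ≤ u 0 := by rw [h0]; exact hp_lt.le
  have hlb : ∀ t : ℝ, 0 ≤ t → p ≤ u t := stmt_5_aux_lb μ ν δ p q hν hpq u hu hfact hp0
  have hub : ∀ t : ℝ, 0 ≤ t → u t ≤ μ / ν := by
    by_contra hcon
    push_neg at hcon
    obtain ⟨t₁, ht₁0, ht₁⟩ := hcon
    have hcont : ContinuousOn u (Set.Icc 0 t₁) := fun t ht =>
      ((hu t ht.1).continuousAt).continuousWithinAt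
    set S : Set ℝ := Set.Icc 0 t₁ ∩ u ⁻¹' Set.Iic (μ / ν) with hSdef
    have hS0 : (0 : ℝ) ∈ S := ⟨⟨le_refl 0, ht₁0⟩, le_of_eq h0⟩
    have hSbdd : BddAbove S := ⟨t₁, fun t ht => ht.1.2⟩
    have hSclosed : IsClosed S :=
      hcont.preimage_isClosed_of_isClosed isClosed_Icc isClosed_Iic
    set t₀ : ℝ := sSup S with ht₀def
    have ht₀S : t₀ ∈ S := hSclosed.csSup_mem ⟨0, hS0⟩ hSbdd
    have ht₀0 : 0 ≤ t₀ := ht₀S.1.1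
    have ht₀le : t₀ ≤ t₁ := ht₀S.1.2
    have ht₁S : t₁ ∉ S := fun h => absurd h.2 (not_le.2 ht₁)
    have ht₀lt : t₀ < t₁ := lt_of_le_of_ne ht₀le (fun h => ht₁S (h ▸ ht₀S))
    have hgt : ∀ t ∈ Set.Ioc t₀ t₁, μ / ν < u t := by
      intro t ht
      by_contra h
      push_neg at h
      have : t ∈ S := ⟨⟨le_trans ht₀0 ht.1.le, ht.2⟩, h⟩
      exact absurd (le_csSup hSbdd this) (not_le.2 ht.1)
    have htends : Filter.Tendsto u (𝓝[>] t₀) (𝓝 (u t₀)) :=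
      ((hu t₀ ht₀0).continuousAt).tendsto.mono_left nhdsWithin_le_nhds
    have hev : ∀ᶠ t in 𝓝[>] t₀, μ / ν ≤ u t := by
      filter_upwards [Ioc_mem_nhdsGT ht₀lt] with t ht using (hgt t ht).le
    have ht₀val : u t₀ = μ / ν := le_antisymm ht₀S.2 (ge_of_tendsto htends hev)
    -- derivative at t₀ is -δ < 0
    have hd : u t₀ * (μ - ν * u t₀) - δ = -δ := by
      rw [ht₀val]; field_simp; ring
    have hslope := hasDerivAt_iff_tendsto_slope.1 (hu t₀ ht₀0)
    rw [hd] at hslope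
    have hneg : ∀ᶠ z in 𝓝[>] t₀, slope u t₀ z < 0 := by
      have : ∀ᶠ z in 𝓝[≠] t₀, slope u t₀ z < 0 :=
        hslope.eventually (eventually_lt_nhds (neg_lt_zero.2 hδ0))
      exact this.filter_mono (nhdsWithin_mono t₀ fun z hz => ne_of_gt hz)
    have hmem : ∀ᶠ z in 𝓝[>] t₀, z ∈ Set.Ioc t₀ t₁ :=
      Filter.eventually_mem_set.2 (Ioc_mem_nhdsGT ht₀lt)
    obtain ⟨z, hz1, hz2⟩ := (hneg.and hmem).exists
    rw [slope_def_field] at hz1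
    have hzpos : 0 < z - t₀ := sub_pos.2 hz2.1
    have h3 : u z - u t₀ < 0 := by
      by_contra h
      push_neg at h
      exact absurd hz1 (not_lt.2 (div_nonneg h hzpos.le))
    have := hgt z hz2
    rw [ht₀val] at h3
    linarith
  -- derivative is nonpositive on [p, μ/ν]
  have hd_nonpos : ∀ t : ℝ, 0 ≤ t → u t * (μ - ν * u t) - δ ≤ 0 := by
    intro t ht
    rw [hfact (u t)]
    have h1 := hlb t ht
    nlinarith [mul_nonneg (mul_nonneg hν.le (sub_nonneg.2 h1))
      (by linarith : (0:ℝ) ≤ u t - q)]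
  have hcontIci : ContinuousOn u (Set.Ici 0) := fun t ht =>
    ((hu t ht).continuousAt).continuousWithinAt
  have hintIci : interior (Set.Ici (0:ℝ)) = Set.Ioi 0 := interior_Ici
  have hanti : AntitoneOn u (Set.Ici 0) := by
    apply antitoneOn_of_deriv_nonpos (convex_Ici 0) hcontIci
    · intro t ht
      rw [hintIci] at ht
      exact ((hu t (le_of_lt ht)).differentiableAt).differentiableWithinAt
    · intro t ht
      rw [hintIci] at ht
      rw [(hu t (le_of_lt ht)).deriv]
      exact hd_nonpos t (le_of_lt ht)
  -- limit
  set v : ℝ → ℝ := fun t => u (max t 0) with hvdef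
  have hvanti : Antitone v := fun a b hab =>
    hanti (Set.mem_Ici.2 (le_max_right a 0)) (Set.mem_Ici.2 (le_max_right b 0))
      (max_le_max hab le_rfl)
  have hvbdd : BddBelow (Set.range v) := by
    refine ⟨p, ?_⟩
    rintro x ⟨t, rfl⟩
    exact hlb _ (le_max_right t 0)
  have htendv : Tendsto v atTop (𝓝 (⨅ t, v t)) := tendsto_atTop_ciInf hvanti hvbdd
  set L : ℝ := ⨅ t, v t with hLdef
  have hLp : p ≤ L := le_ciInf fun t => hlb _ (le_max_right t 0)
  have hLle : ∀ t : ℝ, L ≤ v t := fun t => ciInf_le hvbdd t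
  have hLeq : L = p := by
    by_contra hne
    have hL : p < L := lt_of_le_of_ne hLp (Ne.symm hne)
    set ε : ℝ := ν * (L - p) * (L - q) with hεdef
    have hε : 0 < ε := by
      have : q < L := lt_trans hpq hL
      apply mul_pos (mul_pos hν (by linarith)) (by linarith)
    have huL : ∀ t : ℝ, 0 ≤ t → L ≤ u t := by
      intro t ht
      have h := hLle t
      have hvt : v t = u t := by show u (max t 0) = u t; rw [max_eq_left ht]
      rw [hvt] at h
      exact h
    have hd_le : ∀ t : ℝ, 0 ≤ t → u t * (μ - ν * u t) - δ ≤ -ε := by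
      intro t ht
      rw [hfact (u t), hεdef]
      have h1 := huL t ht
      have h2 : q < L := lt_trans hpq hL
      nlinarith [mul_nonneg (mul_nonneg hν.le (sub_nonneg.2 h1))
        (by linarith : (0:ℝ) ≤ u t + L - p - q)]
    -- g t = u t + ε t is antitone on [0, ∞)
    have hg : AntitoneOn (fun t => u t + ε * t) (Set.Ici 0) := by
      apply antitoneOn_of_deriv_nonpos (convex_Ici 0)
      · exact hcontIci.add (continuousOn_const.mul continuousOn_id)
      · intro t ht
        rw [hintIci] at ht
        exact (((hu t (le_of_lt ht)).add
          ((hasDerivAt_id t).const_mul ε)).differentiableAt).differentiableWithinAt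
      · intro t ht
        rw [hintIci] at ht
        have hder : HasDerivAt (fun t => u t + ε * t)
            ((u t * (μ - ν * u t) - δ) + ε * 1) t :=
          (hu t (le_of_lt ht)).add ((hasDerivAt_id t).const_mul ε)
        rw [hder.deriv]
        have := hd_le t (le_of_lt ht)
        linarith
    set T : ℝ := (u 0 - p) / ε + 1 with hTdef
    have hT0 : 0 ≤ T := by
      have : 0 ≤ (u 0 - p) / ε := div_nonneg (by linarith [hp0]) hε.le
      rw [hTdef]; linarith
    have := hg (Set.mem_Ici.2 le_rfl) (Set.mem_Ici.2 hT0) hT0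
    simp only [mul_zero, add_zero] at this
    have hpT := hlb T hT0
    have hεT : ε * T ≤ u 0 - p := by linarith
    rw [hTdef] at hεT
    have : ε * ((u 0 - p) / ε + 1) = (u 0 - p) + ε := by field_simp
    rw [this] at hεT
    linarith
  have huv : u =ᶠ[atTop] v := by
    filter_upwards [eventually_ge_atTop (0:ℝ)] with t ht
    show u t = u (max t 0)
    rw [max_eq_left ht]
  refine ⟨fun t ht => ⟨hlb t ht, hub t ht⟩, ?_⟩
  have := htendv.congr' huv.symm
  rwa [hLeq] at this
end

section
/- Let μ, ν > 0 and δ > μ²/(4ν). Let ρ_ε be as above with 0 < ε < δ/ν − μ²/(4ν²) suitably small, and let u solve u' = u(μ − νu) − δρ_ε(u), u(0) = μ/ν. Then u is non-increasing and liminf_{t→∞} u(t) ≤ ε. -/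
open Filter Set Topology

/-! Write `F x = x (μ - ν x) - δ ρ x`, so that `u' = F u`. A solution of a scalar autonomous
equation cannot descend to a level where `F > 0`: just before reaching it, it would lie below it,
having crossed it upwards. Since `F ≤ 0` above `u 0 = μ / ν`, this gives `u' ≤ 0` throughout.
Above the threshold, `F x ≤ μ² / (4ν) - δ < 0`, so `u` falls below `ε` in finite time. Finally,
`ρ` is `C¹` with `ρ 0 = 0`, so `F x ≥ -L x` on `[0, μ / ν]`, and an exponential barrier keeps
`u` positive, so the `liminf` is that of a function bounded below. -/

lemma HasDerivAt.eventually_nhdsLT_lt {u : ℝ → ℝ} {c t : ℝ} (hu : HasDerivAt u c t)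
    (hc : 0 < c) : ∀ᶠ s in 𝓝[<] t, u s < u t := by
  have hslope : Tendsto (slope u t) (𝓝[<] t) (𝓝 c) :=
    (hasDerivAt_iff_tendsto_slope.mp hu).mono_left (nhdsLT_le_nhdsNE t)
  filter_upwards [hslope.eventually (eventually_gt_nhds hc), self_mem_nhdsWithin] with s hs hst
  exact (slope_pos_iff_gt hst).mp hs

theorem ContDiff.exists_le_mul_of_eq_zero {ρ : ℝ → ℝ} (hρ : ContDiff ℝ 1 ρ) (h0 : ρ 0 = 0)
    (M : ℝ) : ∃ K : ℝ, ∀ x ∈ Icc 0 M, ρ x ≤ K * x := by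
  obtain ⟨K, hK⟩ := hρ.locallyLipschitz.locallyLipschitzOn.exists_lipschitzOnWith_of_compact
    (isCompact_Icc (a := 0) (b := M))
  refine ⟨K, fun x hx => ?_⟩
  have hdist := hK.dist_le_mul x hx 0 ⟨le_rfl, hx.1.trans hx.2⟩
  rw [Real.dist_eq, Real.dist_eq, h0, sub_zero, sub_zero, abs_of_nonneg hx.1] at hdist
  exact (le_abs_self _).trans hdist

section AutonomousODE

variable {F u : ℝ → ℝ} {a : ℝ}

theorem rhs_nonpos_of_lt_initial {t : ℝ} (hat : a ≤ t)
    (hu : ∀ s ∈ Icc a t, HasDerivAt u (F (u s)) s) (hlt : u t < u a) : F (u t) ≤ 0 := by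
  by_contra! hpos
  have hat' : a < t := hat.lt_of_ne (by rintro rfl; exact hlt.false)
  obtain ⟨s, hus, has, hst⟩ : ∃ s, u s < u t ∧ s ∈ Ioo a t :=
    (((hu t ⟨hat, le_rfl⟩).eventually_nhdsLT_lt hpos).and (Ioo_mem_nhdsLT hat')).exists
  have hbarrier : ∀ x ∈ Icc a s, -u x ≤ -u t :=
    image_le_of_deriv_right_lt_deriv_boundary' (f := fun x => -u x) (f' := fun x => -F (u x))
      (B' := 0)
      (fun x hx => (hu x ⟨hx.1, hx.2.trans hst.le⟩).continuousAt.neg.continuousWithinAt)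
      (fun x hx => (hu x ⟨hx.1, hx.2.le.trans hst.le⟩).neg.hasDerivWithinAt)
      (neg_le_neg hlt.le) continuousOn_const (fun x _ => hasDerivWithinAt_const x _ _)
      (fun x _ hx => by simpa [neg_inj.mp hx] using hpos)
  linarith [hbarrier s (right_mem_Icc.mpr has.le)]

theorem antitoneOn_of_rhs_nonpos_above (hu : ∀ t ∈ Ici a, HasDerivAt u (F (u t)) t)
    (hF : ∀ x, u a ≤ x → F x ≤ 0) : AntitoneOn u (Ici a) := by
  refine antitoneOn_of_hasDerivWithinAt_nonpos (convex_Ici a)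
    (fun t ht => (hu t ht).continuousAt.continuousWithinAt)
    (fun t ht => (hu t (interior_subset ht)).hasDerivWithinAt) fun t ht => ?_
  have hat : a ≤ t := interior_subset (s := Ici a) ht
  rcases lt_or_ge (u t) (u a) with hlt | hge
  · exact rhs_nonpos_of_lt_initial hat (fun s hs => hu s hs.1) hlt
  · exact hF _ hge

theorem exists_le_of_rhs_le_neg {c ε : ℝ} (hu : ∀ t ∈ Ici a, HasDerivAt u (F (u t)) t)
    (hc : 0 < c) (hF : ∀ x, ε ≤ x → F x ≤ -c) : ∃ t ∈ Ici a, u t ≤ ε := by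
  by_contra! habove
  set T := a + (u a - ε) / c
  have haT : a ≤ T :=
    le_add_of_nonneg_right (div_nonneg (sub_nonneg.mpr (habove a self_mem_Ici).le) hc.le)
  have hdecay : ∀ x ∈ Icc a T, u x ≤ u a - c * (x - a) :=
    image_le_of_deriv_right_le_deriv_boundary (f' := fun x => F (u x)) (B' := fun _ => -c)
      (fun x hx => (hu x hx.1).continuousAt.continuousWithinAt)
      (fun x hx => (hu x hx.1).hasDerivWithinAt) (by simp) (by fun_prop)
      (fun x _ => by
        simpa using (((hasDerivAt_id x).sub_const a).const_mul c).const_sub (u a)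
          |>.hasDerivWithinAt)
      (fun x hx => hF _ (habove x hx.1).le)
  have hT : c * (T - a) = u a - ε := by simp only [T]; field_simp; ring
  linarith [hdecay T (right_mem_Icc.mpr haT), habove T haT]

theorem pos_of_rhs_ge_neg_mul {L : ℝ} (hu : ∀ t ∈ Ici a, HasDerivAt u (F (u t)) t)
    (ha : 0 < u a) (hF : ∀ x ∈ Ioc 0 (u a), -(L * x) ≤ F x) {t : ℝ} (ht : a ≤ t) :
    0 < u t := by
  -- the strict lower barrier `u a * exp (-k (x - a))` decays faster than `F ≥ -L x` allows
  set k := |L| + 1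
  set B := fun x => -(u a * Real.exp (-k * (x - a)))
  have hB : ∀ x, HasDerivAt B (k * (u a * Real.exp (-k * (x - a)))) x := fun x => by
    have h := ((((hasDerivAt_id' x).sub_const a).const_mul (-k)).exp.const_mul (u a)).fun_neg
    exact h.congr_deriv (by ring)
  have hbarrier : ∀ x ∈ Icc a t, -u x ≤ B x :=
    image_le_of_deriv_right_lt_deriv_boundary' (f' := fun x => -F (u x))
      (fun x hx => (hu x hx.1).continuousAt.neg.continuousWithinAt)
      (fun x hx => (hu x hx.1).neg.hasDerivWithinAt) (by simp [B])
      (fun x _ => (hB x).continuousAt.continuousWithinAt) (fun x _ => (hB x).hasDerivWithinAt)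
      fun x hx hx_eq => by
        have hux : u x = u a * Real.exp (-k * (x - a)) := by simpa [B] using hx_eq
        have hpos : 0 < u x := hux ▸ mul_pos ha (Real.exp_pos _)
        have hle : u x ≤ u a := hux ▸ mul_le_of_le_one_right ha.le
          (Real.exp_le_one_iff.mpr (by nlinarith [abs_nonneg L, hx.1]))
        have := hF _ ⟨hpos, hle⟩
        rw [← hux]
        nlinarith [le_abs_self L]
  have := hbarrier t (right_mem_Icc.mpr ht)
  have : 0 < u a * Real.exp (-k * (t - a)) := mul_pos ha (Real.exp_pos _)
  simp only [B] at *
  linarith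

end AutonomousODE

def logisticHarvest (μ ν δ : ℝ) (ρ : ℝ → ℝ) (x : ℝ) : ℝ := x * (μ - ν * x) - δ * ρ x

section logisticHarvest

variable {μ ν δ x : ℝ} {ρ : ℝ → ℝ}

theorem logisticHarvest_nonpos (hμ : 0 ≤ μ) (hν : 0 < ν) (hδ : 0 ≤ δ) (hx : μ / ν ≤ x)
    (hρ : 0 ≤ ρ x) : logisticHarvest μ ν δ ρ x ≤ 0 := by
  have hx0 : 0 ≤ x := (div_nonneg hμ hν.le).trans hx
  have hνx : μ ≤ ν * x := by rwa [div_le_iff₀' hν] at hx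
  unfold logisticHarvest
  nlinarith [mul_nonneg hδ hρ]

theorem logisticHarvest_le_of_eq_one (hν : 0 < ν) (hρ : ρ x = 1) :
    logisticHarvest μ ν δ ρ x ≤ μ ^ 2 / (4 * ν) - δ := by
  have hquad : x * (μ - ν * x) ≤ μ ^ 2 / (4 * ν) := by
    rw [le_div_iff₀ (by positivity)]
    nlinarith [sq_nonneg (μ - 2 * ν * x)]
  rw [logisticHarvest, hρ]
  linarith

theorem neg_mul_le_logisticHarvest {K : ℝ} (hν : 0 < ν) (hδ : 0 ≤ δ) (hx0 : 0 ≤ x)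
    (hx : x ≤ μ / ν) (hρ : ρ x ≤ K * x) : -(δ * K * x) ≤ logisticHarvest μ ν δ ρ x := by
  have hνx : ν * x ≤ μ := by rwa [le_div_iff₀' hν] at hx
  unfold logisticHarvest
  nlinarith [mul_le_mul_of_nonneg_left hρ hδ, mul_nonneg hx0 (sub_nonneg.mpr hνx)]

end logisticHarvest

theorem stmt_17_general (μ ν δ ε : ℝ) (hν : 0 < ν) (hμ : 0 < μ)
    (hδ : μ ^ 2 / (4 * ν) < δ)
    (ρ : ℝ → ℝ) (hρC1 : ContDiff ℝ 1 ρ) (hρmono : Monotone ρ)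
    (hρ0 : ∀ s : ℝ, s ≤ 0 → ρ s = 0) (hρ1 : ∀ s : ℝ, ε ≤ s → ρ s = 1)
    (u : ℝ → ℝ)
    (hu : ∀ t : ℝ, 0 ≤ t → HasDerivAt u (u t * (μ - ν * u t) - δ * ρ (u t)) t)
    (h0 : u 0 = μ / ν) :
    AntitoneOn u (Set.Ici 0) ∧ Filter.liminf u atTop ≤ ε := by
  have hu' : ∀ t ∈ Ici 0, HasDerivAt u (logisticHarvest μ ν δ ρ (u t)) t := hu
  have hμν : 0 < μ / ν := by positivity
  have hδ0 : 0 ≤ δ := (by positivity : 0 ≤ μ ^ 2 / (4 * ν)).trans hδ.le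
  have hρ_nonneg : ∀ x, 0 ≤ x → 0 ≤ ρ x := fun x hx => hρ0 0 le_rfl ▸ hρmono hx
  have hanti : AntitoneOn u (Ici 0) := antitoneOn_of_rhs_nonpos_above hu' fun x hx =>
    logisticHarvest_nonpos hμ.le hν hδ0 (h0 ▸ hx) (hρ_nonneg x (hμν.le.trans (h0 ▸ hx)))
  obtain ⟨K, hK⟩ := hρC1.exists_le_mul_of_eq_zero (hρ0 0 le_rfl) (μ / ν)
  have hpos : ∀ t ∈ Ici 0, 0 < u t := fun t ht =>
    pos_of_rhs_ge_neg_mul (L := δ * K) hu' (h0 ▸ hμν) (fun x hx =>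
      neg_mul_le_logisticHarvest hν hδ0 hx.1.le (h0 ▸ hx.2) (hK x ⟨hx.1.le, h0 ▸ hx.2⟩)) ht
  obtain ⟨t₀, ht₀, hut₀⟩ := exists_le_of_rhs_le_neg hu' (sub_pos.mpr hδ)
    fun x hx => (logisticHarvest_le_of_eq_one hν (hρ1 x hx)).trans_eq (neg_sub _ _).symm
  refine ⟨hanti, liminf_le_of_frequently_le ?_ ?_⟩
  · exact ((eventually_ge_atTop t₀).mono fun t ht =>
      (hanti ht₀ (ht₀.trans ht) ht).trans hut₀).frequently
  · exact isBoundedUnder_of_eventually_ge ((eventually_ge_atTop 0).mono fun t ht => (hpos t ht).le)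

/-- With the regularized threshold and supercritical harvesting, the solution
starting from `μ/ν` is non-increasing and `liminf u ≤ ε`. -/
theorem stmt_17 (μ ν δ ε : ℝ) (hν : 0 < ν) (hμ : 0 < μ)
    (hδ : μ ^ 2 / (4 * ν) < δ) (hε0 : 0 < ε)
    (hεsmall : ε < δ / ν - μ ^ 2 / (4 * ν ^ 2))
    (ρ : ℝ → ℝ) (hρC1 : ContDiff ℝ 1 ρ) (hρmono : Monotone ρ)
    (hρ0 : ∀ s : ℝ, s ≤ 0 → ρ s = 0) (hρ1 : ∀ s : ℝ, ε ≤ s → ρ s = 1)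
    (u : ℝ → ℝ)
    (hu : ∀ t : ℝ, 0 ≤ t → HasDerivAt u (u t * (μ - ν * u t) - δ * ρ (u t)) t)
    (h0 : u 0 = μ / ν) :
    AntitoneOn u (Set.Ici 0) ∧ Filter.liminf u atTop ≤ ε :=
  stmt_17_general μ ν δ ε hν hμ hδ ρ hρC1 hρmono hρ0 hρ1 u hu h0
end
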